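/- In the factorization P(x | x*, v) P(x* | y) P(y) P(v | y) over finite spaces with all factors positive, suppose additionally X* = e(X) for a deterministic function e (X* is recoverable from X). Then P(Y=y | X=x, V=v) = P(Y=y | X*=e(x)) for all x, v; i.e., the Bayes-optimal predictor from (X, V) coincides with E[Y | X*]. -/
import Mathlib


/-- In the factorization
`J y v s x = pY y * q y v * kS y s * kX s v x` over finite spaces, with
`X* = e(X)` recoverable (`kX s v x = 0` unless `e x = s`, and positive on
consistent values), and with `Y ⟂ V` (`q y v` does not depend on `y`), the
Bayes-optimal predictor from `(X, V)` coincides with `E[Y | X*]`: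
`P(Y=y | X=x, V=v) = P(Y=y | X*=e(x))`. -/
theorem bayes_predictor_depends_only_on_sufficient_statistic
    {S T : Type*} [Fintype S] [Fintype T]
    (pY : Fin 2 → ℝ) (q : Fin 2 → Fin 2 → ℝ)
    (kS : Fin 2 → S → ℝ) (kX : S → Fin 2 → T → ℝ)
    (hpY : ∀ y, 0 < pY y) (hq : ∀ y v, 0 < q y v)
    (hkS : ∀ y s, 0 < kS y s) (hkX0 : ∀ s v x, 0 ≤ kX s v x)
    (hpY1 : ∑ y : Fin 2, pY y = 1) (hq1 : ∀ y, ∑ v : Fin 2, q y v = 1)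
    (hkS1 : ∀ y, ∑ s : S, kS y s = 1) (hkX1 : ∀ s v, ∑ x : T, kX s v x = 1)
    (e : T → S)
    -- consistency of the recovery map: P(X=x | X*=s, V=v) = 0 unless e x = s
    (hcons : ∀ (s : S) (v : Fin 2) (x : T), e x ≠ s → kX s v x = 0)
    (hsupp : ∀ (v : Fin 2) (x : T), 0 < kX (e x) v x)
    -- Y ⟂ V : P(V=v | Y=y) does not depend on y
    (hindep : ∀ y v : Fin 2, q y v = q 0 v) :
    ∀ (y v : Fin 2) (x : T),
      -- P(Y=y | X=x, V=v)
      (∑ s : S, pY y * q y v * kS y s * kX s v x)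
          / (∑ y' : Fin 2, ∑ s : S, pY y' * q y' v * kS y' s * kX s v x)
      -- = P(Y=y | X*=e(x))
      = (∑ v' : Fin 2, ∑ x' : T, pY y * q y v' * kS y (e x) * kX (e x) v' x')
          / (∑ y' : Fin 2, ∑ v' : Fin 2, ∑ x' : T,
              pY y' * q y' v' * kS y' (e x) * kX (e x) v' x') := by
  intro y v x
  have hS : ∀ (y' v' : Fin 2),
      ∑ s : S, pY y' * q y' v' * kS y' s * kX s v' x
        = pY y' * q y' v' * kS y' (e x) * kX (e x) v' x := by
    intro y' v'
    apply Finset.sum_eq_single_of_mem (e x) (Finset.mem_univ _)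
    intro s _ hs
    rw [hcons s v' x (fun h => hs h.symm), mul_zero]
  have hRHS : ∀ y' : Fin 2,
      ∑ v' : Fin 2, ∑ x' : T, pY y' * q y' v' * kS y' (e x) * kX (e x) v' x'
        = pY y' * kS y' (e x) := by
    intro y'
    have h1 : ∀ v' : Fin 2, ∑ x' : T, pY y' * q y' v' * kS y' (e x) * kX (e x) v' x'
        = pY y' * q y' v' * kS y' (e x) := by
      intro v'
      rw [← Finset.mul_sum, hkX1, mul_one]
    simp only [h1]
    have h2 : ∑ v' : Fin 2, pY y' * q y' v' * kS y' (e x)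
        = pY y' * kS y' (e x) * ∑ v' : Fin 2, q y' v' := by
      rw [Finset.mul_sum]; exact Finset.sum_congr rfl (fun _ _ => by ring)
    rw [h2, hq1, mul_one]
  simp only [hS, hRHS, Fin.sum_univ_two]
  rw [hindep y v, hindep 1 v]
  have hc : (q 0 v * kX (e x) v x) ≠ 0 :=
    ne_of_gt (mul_pos (hq 0 v) (hsupp v x))
  have hD : (pY 0 * kS 0 (e x) + pY 1 * kS 1 (e x)) ≠ 0 :=
    ne_of_gt (add_pos (mul_pos (hpY 0) (hkS 0 _)) (mul_pos (hpY 1) (hkS 1 _)))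
  rw [show pY y * q 0 v * kS y (e x) * kX (e x) v x
      = (q 0 v * kX (e x) v x) * (pY y * kS y (e x)) by ring,
    show pY 0 * q 0 v * kS 0 (e x) * kX (e x) v x + pY 1 * q 0 v * kS 1 (e x) * kX (e x) v x
      = (q 0 v * kX (e x) v x) * (pY 0 * kS 0 (e x) + pY 1 * kS 1 (e x)) by ring,
    mul_div_mul_left _ _ hc]
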